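/- arXiv:2504.16018 — 5 statements merged into one kernel-verified Lean document; each statement's English description precedes it below -/
import Mathlib

section
/- Let V be a 4-dimensional real vector space. Let L and R be finite nonempty families of 2-dimensional linear subspaces of V (projective lines in ℝP³) such that every member of L has nontrivial intersection with every member of R, and such that the graph with vertex set L and an edge between l, l' whenever l ⊓ l' ≠ ⊥ is connected (i.e. the union of the lines of L is connected). Then, possibly after interchanging the roles of L and R, one of the following six cases holds: (1) there is a 1-dimensional subspace a contained in every member of L and every member of R; (2) there is a 3-dimensional subspace P containing every member of L and every member of R; (3) there are a 1-dimensional subspace a and a 3-dimensional subspace P with a ≤ P such that every l ∈ L satisfies a ≤ l ≤ P, and every r ∈ R satisfies r ≤ P or a ≤ r; (4) there are 3-dimensional subspaces P₁, P₂ and 1-dimensional subspaces a₁, a₂ both contained in P₁ ⊓ P₂ such that every l ∈ L satisfies (l ≤ P₁ and a₁ ≤ l) or (l ≤ P₂ and a₂ ≤ l), and every r ∈ R satisfies (r ≤ P₁ and a₂ ≤ r) or (r ≤ P₂ and a₁ ≤ r); (5) L consists of exactly one subspace; (6) L consists of exactly two subspaces l₁, l₂ with l₁ ⊓ l₂ =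 ⊥, and every r ∈ R has nontrivial intersection with both l₁ and l₂. -/
open Module Submodule

section Helpers

variable {V : Type*} [AddCommGroup V] [Module ℝ V] [FiniteDimensional ℝ V]

lemma dimf (A B : Submodule ℝ V) :
    finrank ℝ ↥(A ⊔ B) + finrank ℝ ↥(A ⊓ B) = finrank ℝ A + finrank ℝ B :=
  Submodule.finrank_sup_add_finrank_inf_eq A B

lemma pos_of_ne_bot {A : Submodule ℝ V} (h : A ≠ ⊥) : 0 < finrank ℝ A :=
  Nat.pos_of_ne_zero fun h0 => h (Submodule.finrank_eq_zero.mp h0)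

lemma bot_of_zero {A : Submodule ℝ V} (h : finrank ℝ A = 0) : A = ⊥ :=
  Submodule.finrank_eq_zero.mp h

lemma eq_of_le_rank {A B : Submodule ℝ V} (h : A ≤ B)
    (hr : finrank ℝ B ≤ finrank ℝ A) : A = B :=
  Submodule.eq_of_le_of_finrank_le h hr

omit [FiniteDimensional ℝ V] in
lemma nbcomm {A B : Submodule ℝ V} (h : A ⊓ B ≠ ⊥) : B ⊓ A ≠ ⊥ := by
  rwa [inf_comm]

/-- distinct 2-dim subspaces meeting nontrivially meet in dim 1. -/
lemma inf_one {A B : Submodule ℝ V} (hA : finrank ℝ A = 2) (hB : finrank ℝ B = 2)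
    (hne : A ≠ B) (hbot : A ⊓ B ≠ ⊥) : finrank ℝ ↥(A ⊓ B) = 1 := by
  have h1 : 0 < finrank ℝ ↥(A ⊓ B) := pos_of_ne_bot hbot
  have h2 : finrank ℝ ↥(A ⊓ B) ≤ 2 := hA ▸ Submodule.finrank_mono inf_le_left
  rcases Nat.lt_or_ge (finrank ℝ ↥(A ⊓ B)) 2 with h | h
  · omega
  · exfalso
    have e1 : A ⊓ B = A := eq_of_le_rank inf_le_left (by omega)
    have : A ≤ B := e1 ▸ inf_le_right
    exact hne (eq_of_le_rank this (by omega))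

/-- two distinct 1-dim subspaces of a 2-dim subspace span it. -/
lemma span2 {q q' r : Submodule ℝ V} (hq : finrank ℝ q = 1) (hq' : finrank ℝ q' = 1)
    (hne : q ≠ q') (h1 : q ≤ r) (h2 : q' ≤ r) (hr : finrank ℝ r = 2) : q ⊔ q' = r := by
  have hqq' : q ⊓ q' = ⊥ := by
    by_contra hb
    have h0 : 0 < finrank ℝ ↥(q ⊓ q') := pos_of_ne_bot hb
    have hle : finrank ℝ ↥(q ⊓ q') ≤ 1 := hq ▸ Submodule.finrank_mono inf_le_left
    have e1 : q ⊓ q' = q := eq_of_le_rank inf_le_left (by omega)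
    exact hne (eq_of_le_rank (e1 ▸ inf_le_right) (by omega))
  have hd := dimf q q'
  rw [hqq', finrank_bot] at hd
  exact eq_of_le_rank (sup_le h1 h2) (by omega)

lemma skew_top (hV : finrank ℝ V = 4) {A B : Submodule ℝ V} (hA : finrank ℝ A = 2)
    (hB : finrank ℝ B = 2) (h : A ⊓ B = ⊥) : A ⊔ B = ⊤ := by
  apply Submodule.eq_top_of_finrank_eq
  have hd := dimf A B
  rw [h, finrank_bot] at hd
  omega

/-- a 2-dim subspace meeting both members of a skew pair decomposes. -/
lemma transversal (W1 W2 r : Submodule ℝ V) (h12 : W1 ⊓ W2 = ⊥) (hr : finrank ℝ r = 2)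
    (h1 : r ⊓ W1 ≠ ⊥) (h2 : r ⊓ W2 ≠ ⊥) :
    finrank ℝ ↥(r ⊓ W1) = 1 ∧ finrank ℝ ↥(r ⊓ W2) = 1 ∧ (r ⊓ W1) ⊔ (r ⊓ W2) = r := by
  have hb : (r ⊓ W1) ⊓ (r ⊓ W2) = ⊥ := by
    rw [← le_bot_iff, ← h12]
    exact inf_le_inf inf_le_right inf_le_right
  have hd := dimf (r ⊓ W1) (r ⊓ W2)
  rw [hb, finrank_bot] at hd
  have p1 : 0 < finrank ℝ ↥(r ⊓ W1) := pos_of_ne_bot h1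
  have p2 : 0 < finrank ℝ ↥(r ⊓ W2) := pos_of_ne_bot h2
  have hle : finrank ℝ ↥((r ⊓ W1) ⊔ (r ⊓ W2)) ≤ 2 :=
    hr ▸ Submodule.finrank_mono (sup_le inf_le_left inf_le_left)
  have heq : (r ⊓ W1) ⊔ (r ⊓ W2) = r :=
    eq_of_le_rank (sup_le inf_le_left inf_le_left) (by omega)
  exact ⟨by omega, by omega, heq⟩

lemma disj_sup {M q : Submodule ℝ V} (hq : finrank ℝ q = 1) (h : ¬ q ≤ M) :
    finrank ℝ ↥(M ⊔ q) = finrank ℝ M + 1 := by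
  have hb : M ⊓ q = ⊥ := by
    by_contra hb
    have h1 : 0 < finrank ℝ ↥(M ⊓ q) := pos_of_ne_bot hb
    have h2 : finrank ℝ ↥(M ⊓ q) ≤ 1 := hq ▸ Submodule.finrank_mono inf_le_right
    have e : M ⊓ q = q := eq_of_le_rank (inf_le_right : M ⊓ q ≤ q) (by omega)
    exact h (e ▸ inf_le_left)
  have hd := dimf M q
  rw [hb, finrank_bot] at hd
  omega

lemma plane_line (hV : finrank ℝ V = 4) {P W : Submodule ℝ V} (hP : finrank ℝ P = 3)
    (hW : finrank ℝ W = 2) (hnle : ¬ W ≤ P) : finrank ℝ ↥(P ⊓ W) = 1 := by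
  have hlt : P < P ⊔ W := lt_of_le_of_ne le_sup_left
    (fun h => hnle (by rw [h]; exact le_sup_right))
  have h4 : finrank ℝ ↥(P ⊔ W) ≤ 4 := hV ▸ Submodule.finrank_le _
  have h3 : 3 < finrank ℝ ↥(P ⊔ W) := hP ▸ Submodule.finrank_lt_finrank_of_lt hlt
  have hd := dimf P W
  omega

end Helpers

/-- The six cases in the classification of interesting pairs of families of
projective lines in ℝP³ (Proposition 6.6), modeled by 2-dimensional linear
subspaces of a 4-dimensional real vector space `V`. -/
def InterestingPairCases {V : Type*} [AddCommGroup V] [Module ℝ V]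
    (L R : Set (Submodule ℝ V)) : Prop :=
  -- (1) all lines pass through a common point a
  (∃ a : Submodule ℝ V, Module.finrank ℝ a = 1 ∧
      (∀ l ∈ L, a ≤ l) ∧ (∀ r ∈ R, a ≤ r)) ∨
  -- (2) all lines lie in a common plane P
  (∃ P : Submodule ℝ V, Module.finrank ℝ P = 3 ∧
      (∀ l ∈ L, l ≤ P) ∧ (∀ r ∈ R, r ≤ P)) ∨
  -- (3) all lines of L pass through a and lie in P ∋ a; each line of R lies
  -- in P or contains a
  (∃ a P : Submodule ℝ V, Module.finrank ℝ a = 1 ∧ Module.finrank ℝ P = 3 ∧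
      a ≤ P ∧ (∀ l ∈ L, a ≤ l ∧ l ≤ P) ∧ (∀ r ∈ R, r ≤ P ∨ a ≤ r)) ∨
  -- (4) two planes P₁, P₂ and two points a₁, a₂ in their intersection
  (∃ P₁ P₂ a₁ a₂ : Submodule ℝ V,
      Module.finrank ℝ P₁ = 3 ∧ Module.finrank ℝ P₂ = 3 ∧
      Module.finrank ℝ a₁ = 1 ∧ Module.finrank ℝ a₂ = 1 ∧
      a₁ ≤ P₁ ⊓ P₂ ∧ a₂ ≤ P₁ ⊓ P₂ ∧
      (∀ l ∈ L, (l ≤ P₁ ∧ a₁ ≤ l) ∨ (l ≤ P₂ ∧ a₂ ≤ l)) ∧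
      (∀ r ∈ R, (r ≤ P₁ ∧ a₂ ≤ r) ∨ (r ≤ P₂ ∧ a₁ ≤ r))) ∨
  -- (5) L consists of one line
  (∃ l : Submodule ℝ V, L = {l}) ∨
  -- (6) L consists of two skew lines, each line of R meets both
  (∃ l₁ l₂ : Submodule ℝ V, l₁ ≠ l₂ ∧ L = {l₁, l₂} ∧ l₁ ⊓ l₂ = ⊥ ∧
      ∀ r ∈ R, r ⊓ l₁ ≠ ⊥ ∧ r ⊓ l₂ ≠ ⊥)

section Main

variable {V : Type*} [AddCommGroup V] [Module ℝ V] [FiniteDimensional ℝ V]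

/-- the classification for a pairwise-meeting family. -/
lemma pairwise_case (hV : Module.finrank ℝ V = 4) (S R : Set (Submodule ℝ V))
    (hSne : S.Nonempty)
    (hSdim : ∀ l ∈ S, finrank ℝ l = 2) (hRdim : ∀ r ∈ R, finrank ℝ r = 2)
    (hmeet : ∀ l ∈ S, ∀ r ∈ R, l ⊓ r ≠ ⊥)
    (hpair : ∀ l ∈ S, ∀ l' ∈ S, l ⊓ l' ≠ ⊥) :
    InterestingPairCases S R := by
  unfold InterestingPairCases
  obtain ⟨l0, hl0⟩ := hSne
  by_cases hone : ∀ l ∈ S, l = l0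
  · exact Or.inr (Or.inr (Or.inr (Or.inr (Or.inl
      ⟨l0, Set.eq_singleton_iff_unique_mem.mpr ⟨hl0, hone⟩⟩))))
  push_neg at hone
  obtain ⟨l1, hl1, hl1ne⟩ := hone
  have hd0 := hSdim l0 hl0
  have hd1 := hSdim l1 hl1
  have ha1 : finrank ℝ ↥(l0 ⊓ l1) = 1 :=
    inf_one hd0 hd1 (fun h => hl1ne h.symm) (hpair l0 hl0 l1 hl1)
  have hPdim : finrank ℝ ↥(l0 ⊔ l1) = 3 := by have := dimf l0 l1; omega
  have haP : l0 ⊓ l1 ≤ l0 ⊔ l1 := inf_le_left.trans le_sup_left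
  -- any 2-dim w meeting l0, l1 but not containing a is inside P
  have key1 : ∀ w : Submodule ℝ V, finrank ℝ w = 2 → w ⊓ l0 ≠ ⊥ → w ⊓ l1 ≠ ⊥ →
      ¬ (l0 ⊓ l1 ≤ w) → w ≤ l0 ⊔ l1 := by
    intro w hw m0 m1 hnaw
    have hw0 : w ≠ l0 := fun h => hnaw (h ▸ inf_le_left)
    have hw1 : w ≠ l1 := fun h => hnaw (h ▸ inf_le_right)
    have q0d : finrank ℝ ↥(w ⊓ l0) = 1 := inf_one hw hd0 hw0 m0
    have q1d : finrank ℝ ↥(w ⊓ l1) = 1 := inf_one hw hd1 hw1 m1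
    have hne : w ⊓ l0 ≠ w ⊓ l1 := by
      intro h
      apply hnaw
      have h1 : w ⊓ l0 ≤ l0 ⊓ l1 := le_inf inf_le_right (h ▸ inf_le_right)
      have h2 : w ⊓ l0 = l0 ⊓ l1 := eq_of_le_rank h1 (by omega)
      exact h2 ▸ inf_le_left
    have hsp := span2 q0d q1d hne inf_le_left inf_le_left hw
    calc w = (w ⊓ l0) ⊔ (w ⊓ l1) := hsp.symm
      _ ≤ l0 ⊔ l1 := sup_le (inf_le_right.trans le_sup_left) (inf_le_right.trans le_sup_right)
  by_cases hpen : ∀ l ∈ S, l0 ⊓ l1 ≤ l ∧ l ≤ l0 ⊔ l1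
  · refine Or.inr (Or.inr (Or.inl ⟨l0 ⊓ l1, l0 ⊔ l1, ha1, hPdim, haP, hpen, ?_⟩))
    intro r hr
    by_cases har : l0 ⊓ l1 ≤ r
    · exact Or.inr har
    · exact Or.inl (key1 r (hRdim r hr) (nbcomm (hmeet l0 hl0 r hr))
        (nbcomm (hmeet l1 hl1 r hr)) har)
  push_neg at hpen
  obtain ⟨l3, hl3, hl3p⟩ := hpen
  have hd3 := hSdim l3 hl3
  by_cases hal3 : l0 ⊓ l1 ≤ l3
  · -- l3 escapes the plane: all lines pass through a
    have hnP : ¬ l3 ≤ l0 ⊔ l1 := hl3p hal3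
    have hPl3 : (l0 ⊔ l1) ⊓ l3 = l0 ⊓ l1 := by
      have h1 : finrank ℝ ↥((l0 ⊔ l1) ⊓ l3) = 1 := plane_line hV hPdim hd3 hnP
      exact (eq_of_le_rank (le_inf haP hal3) (by omega)).symm
    have key2 : ∀ w : Submodule ℝ V, finrank ℝ w = 2 → w ⊓ l0 ≠ ⊥ → w ⊓ l1 ≠ ⊥ →
        w ⊓ l3 ≠ ⊥ → l0 ⊓ l1 ≤ w := by
      intro w hw m0 m1 m3
      by_contra hnaw
      have hwP := key1 w hw m0 m1 hnaw
      have h1 : w ⊓ l3 ≤ l0 ⊓ l1 := by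
        rw [← hPl3]
        exact inf_le_inf_right l3 hwP
      have h2 : 0 < finrank ℝ ↥(w ⊓ l3) := pos_of_ne_bot m3
      have h3 : w ⊓ l3 = l0 ⊓ l1 := eq_of_le_rank h1 (by omega)
      exact hnaw (h3 ▸ inf_le_left)
    refine Or.inl ⟨l0 ⊓ l1, ha1, ?_, ?_⟩
    · intro l hl
      exact key2 l (hSdim l hl) (hpair l hl l0 hl0) (hpair l hl l1 hl1) (hpair l hl l3 hl3)
    · intro r hr
      exact key2 r (hRdim r hr) (nbcomm (hmeet l0 hl0 r hr)) (nbcomm (hmeet l1 hl1 r hr))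
        (nbcomm (hmeet l3 hl3 r hr))
  · -- l3 misses a: all lines lie in the plane
    have hl3P : l3 ≤ l0 ⊔ l1 :=
      key1 l3 hd3 (hpair l3 hl3 l0 hl0) (hpair l3 hl3 l1 hl1) hal3
    have key3 : ∀ w : Submodule ℝ V, finrank ℝ w = 2 → w ⊓ l0 ≠ ⊥ → w ⊓ l1 ≠ ⊥ →
        w ⊓ l3 ≠ ⊥ → w ≤ l0 ⊔ l1 := by
      intro w hw m0 m1 m3
      by_cases hwP : w ≤ l0 ⊔ l1
      · exact hwP
      exfalso
      have hPw : finrank ℝ ↥((l0 ⊔ l1) ⊓ w) = 1 := plane_line hV hPdim hw hwP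
      have e0 : w ⊓ l0 = (l0 ⊔ l1) ⊓ w := by
        refine eq_of_le_rank (le_inf (inf_le_right.trans le_sup_left) inf_le_left) ?_
        have := pos_of_ne_bot m0; omega
      have e1 : w ⊓ l1 = (l0 ⊔ l1) ⊓ w := by
        refine eq_of_le_rank (le_inf (inf_le_right.trans le_sup_right) inf_le_left) ?_
        have := pos_of_ne_bot m1; omega
      have e3 : w ⊓ l3 = (l0 ⊔ l1) ⊓ w := by
        refine eq_of_le_rank (le_inf (inf_le_right.trans hl3P) inf_le_left) ?_
        have := pos_of_ne_bot m3; omega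
      have hq : (l0 ⊔ l1) ⊓ w ≤ l0 ⊓ l1 :=
        le_inf (e0 ▸ inf_le_right) (e1 ▸ inf_le_right)
      have hq2 : (l0 ⊔ l1) ⊓ w = l0 ⊓ l1 := eq_of_le_rank hq (by omega)
      exact hal3 (hq2 ▸ e3 ▸ inf_le_right)
    refine Or.inr (Or.inl ⟨l0 ⊔ l1, hPdim, ?_, ?_⟩)
    · intro l hl
      exact key3 l (hSdim l hl) (hpair l hl l0 hl0) (hpair l hl l1 hl1) (hpair l hl l3 hl3)
    · intro r hr
      exact key3 r (hRdim r hr) (nbcomm (hmeet l0 hl0 r hr)) (nbcomm (hmeet l1 hl1 r hr))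
        (nbcomm (hmeet l3 hl3 r hr))

end Main

section Hard

variable {V : Type*} [AddCommGroup V] [Module ℝ V] [FiniteDimensional ℝ V]

/-- two distinct transversals of a skew pair which meet share a foot. -/
lemma K1 (hV : finrank ℝ V = 4) {l1 l3 r1 r2 : Submodule ℝ V}
    (dl1 : finrank ℝ l1 = 2) (dl3 : finrank ℝ l3 = 2)
    (dr1 : finrank ℝ r1 = 2) (dr2 : finrank ℝ r2 = 2)
    (hr12 : r1 ⊓ r2 = ⊥)
    (m11 : l1 ⊓ r1 ≠ ⊥) (m12 : l1 ⊓ r2 ≠ ⊥)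
    (h31 : l3 ⊓ r1 ≠ ⊥) (h32 : l3 ⊓ r2 ≠ ⊥)
    (hm : l3 ⊓ l1 ≠ ⊥) :
    l3 ⊓ r1 = l1 ⊓ r1 ∨ l3 ⊓ r2 = l1 ⊓ r2 := by
  by_contra hcon
  push_neg at hcon
  obtain ⟨d31, d32, h3e⟩ := transversal r1 r2 l3 hr12 dl3 h31 h32
  obtain ⟨d11, d12, h1e⟩ := transversal r1 r2 l1 hr12 dl1 m11 m12
  have e1 : (l3 ⊓ r1) ⊔ (l1 ⊓ r1) = r1 :=
    span2 d31 d11 hcon.1 inf_le_right inf_le_right dr1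
  have e2 : (l3 ⊓ r2) ⊔ (l1 ⊓ r2) = r2 :=
    span2 d32 d12 hcon.2 inf_le_right inf_le_right dr2
  have htop : l3 ⊔ l1 = ⊤ := by
    conv_lhs => rw [← h3e, ← h1e]
    rw [show ((l3 ⊓ r1) ⊔ (l3 ⊓ r2)) ⊔ ((l1 ⊓ r1) ⊔ (l1 ⊓ r2)) =
        ((l3 ⊓ r1) ⊔ (l1 ⊓ r1)) ⊔ ((l3 ⊓ r2) ⊔ (l1 ⊓ r2)) from by
      simp only [sup_assoc, sup_comm, sup_left_comm]]
    rw [e1, e2]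
    exact skew_top hV dr1 dr2 hr12
  have hd := dimf l3 l1
  rw [htop] at hd
  have h4 : finrank ℝ (⊤ : Submodule ℝ V) = 4 := by rw [finrank_top]; exact hV
  exact hm (bot_of_zero (by omega))

/-- key collinearity lemma. -/
lemma K2 (hV : finrank ℝ V = 4) {l1 l2 r1 r2 l3 r : Submodule ℝ V}
    (dl1 : finrank ℝ l1 = 2) (dl2 : finrank ℝ l2 = 2)
    (dr1 : finrank ℝ r1 = 2) (dr2 : finrank ℝ r2 = 2)
    (dl3 : finrank ℝ l3 = 2) (dr : finrank ℝ r = 2)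
    (hl12 : l1 ⊓ l2 = ⊥) (hr12 : r1 ⊓ r2 = ⊥)
    (m11 : l1 ⊓ r1 ≠ ⊥) (m12 : l1 ⊓ r2 ≠ ⊥) (m21 : l2 ⊓ r1 ≠ ⊥) (m22 : l2 ⊓ r2 ≠ ⊥)
    (h31 : l3 ⊓ r1 ≠ ⊥) (h32 : l3 ⊓ r2 ≠ ⊥) (h3 : l1 ⊓ r1 ≤ l3) (hne : l3 ≠ l1)
    (n1 : r ⊓ l1 ≠ ⊥) (n2 : r ⊓ l2 ≠ ⊥) (n3 : r ⊓ l3 ≠ ⊥) :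
    l1 ⊓ r1 ≤ r ∨ l2 ⊓ r2 ≤ r := by
  by_contra hcon
  push_neg at hcon
  obtain ⟨hc1, hc2⟩ := hcon
  obtain ⟨du, dv, huv⟩ := transversal l1 l2 r hl12 dr n1 n2
  obtain ⟨dx, dy, hxy⟩ := transversal r1 r2 l3 hr12 dl3 h31 h32
  obtain ⟨d11, d12, hl1e⟩ := transversal r1 r2 l1 hr12 dl1 m11 m12
  have d22 : finrank ℝ ↥(l2 ⊓ r2) = 1 := (transversal r1 r2 l2 hr12 dl2 m21 m22).2.1
  -- the foot of l3 on r1 is the common point with l1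
  have hx : l1 ⊓ r1 = l3 ⊓ r1 :=
    eq_of_le_rank (le_inf h3 inf_le_right) (by omega)
  -- the foot of l3 on r2 differs from that of l1
  have hy : l3 ⊓ r2 ≠ l1 ⊓ r2 := by
    intro h
    apply hne
    rw [← hxy, ← hx, h, hl1e]
  have hu : r ⊓ l1 ≠ l1 ⊓ r1 := fun h => hc1 (h ▸ inf_le_left)
  have hv : r ⊓ l2 ≠ l2 ⊓ r2 := fun h => hc2 (h ▸ inf_le_left)
  have hl1' : (r ⊓ l1) ⊔ (l1 ⊓ r1) = l1 :=
    span2 du d11 hu inf_le_right inf_le_left dl1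
  have dM : finrank ℝ ↥(l1 ⊔ r2) = 3 := by have := dimf l1 r2; omega
  have htop2 : (l1 ⊔ r2) ⊔ l2 = ⊤ := by
    rw [eq_top_iff, ← skew_top hV dl1 dl2 hl12]
    exact sup_le (le_sup_left.trans le_sup_left) le_sup_right
  have h4 : finrank ℝ (⊤ : Submodule ℝ V) = 4 := by rw [finrank_top]; exact hV
  have dMl2 : finrank ℝ ↥((l1 ⊔ r2) ⊓ l2) = 1 := by
    have := dimf (l1 ⊔ r2) l2
    rw [htop2] at this
    omega
  have hMl2 : (l1 ⊔ r2) ⊓ l2 = l2 ⊓ r2 := by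
    refine (eq_of_le_rank (le_inf (inf_le_right.trans le_sup_right) inf_le_left) ?_).symm
    omega
  have hvM : ¬ (r ⊓ l2 ≤ l1 ⊔ r2) := by
    intro h
    exact hv (eq_of_le_rank (hMl2 ▸ le_inf h inf_le_right) (by omega))
  have hvl1 : ¬ (r ⊓ l2 ≤ l1) := by
    intro h
    exact n2 (le_bot_iff.mp (hl12 ▸ le_inf h inf_le_right))
  have hWd : finrank ℝ ↥(l1 ⊔ (r ⊓ l2)) = 3 := by rw [disj_sup dv hvl1, dl1]
  have hWtop : (l1 ⊔ (r ⊓ l2)) ⊔ r2 = ⊤ := by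
    have hre : (l1 ⊔ (r ⊓ l2)) ⊔ r2 = (l1 ⊔ r2) ⊔ (r ⊓ l2) := sup_right_comm l1 (r ⊓ l2) r2
    rw [hre]
    apply Submodule.eq_top_of_finrank_eq
    rw [disj_sup dv hvM, dM, hV]
  have dWr2 : finrank ℝ ↥((l1 ⊔ (r ⊓ l2)) ⊓ r2) = 1 := by
    have := dimf (l1 ⊔ (r ⊓ l2)) r2
    rw [hWtop] at this
    omega
  have hWr2 : (l1 ⊔ (r ⊓ l2)) ⊓ r2 = l1 ⊓ r2 := by
    refine (eq_of_le_rank (le_inf (inf_le_left.trans le_sup_left) inf_le_right) ?_).symm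
    omega
  have hyW : ¬ (l3 ⊓ r2 ≤ l1 ⊔ (r ⊓ l2)) := by
    intro h
    exact hy (eq_of_le_rank (hWr2 ▸ le_inf h inf_le_right) (by omega))
  have hl1le : l1 ≤ r ⊔ l3 :=
    hl1'.ge.trans (sup_le (inf_le_left.trans le_sup_left) (h3.trans le_sup_right))
  have hrl3 : r ⊔ l3 = (l1 ⊔ (r ⊓ l2)) ⊔ (l3 ⊓ r2) := by
    apply le_antisymm
    · apply sup_le
      · exact huv.ge.trans (sup_le (inf_le_right.trans (le_sup_left.trans le_sup_left))
          (le_sup_right.trans le_sup_left))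
      · exact hxy.ge.trans (sup_le
          (hx.ge.trans (inf_le_left.trans (le_sup_left.trans le_sup_left))) le_sup_right)
    · exact sup_le (sup_le hl1le (inf_le_left.trans le_sup_left))
        (inf_le_left.trans le_sup_right)
  have hd4 : finrank ℝ ↥(r ⊔ l3) = 4 := by rw [hrl3, disj_sup dy hyW, hWd]
  have := dimf r l3
  exact n3 (bot_of_zero (by omega))

end Hard

section Assemble

variable {V : Type*} [AddCommGroup V] [Module ℝ V] [FiniteDimensional ℝ V]

/-- assembling case (4) from the two pencil conditions. -/
lemma main4 (hV : finrank ℝ V = 4) (L R : Set (Submodule ℝ V))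
    (hLdim : ∀ l ∈ L, finrank ℝ l = 2) (hRdim : ∀ r ∈ R, finrank ℝ r = 2)
    (hmeet : ∀ l ∈ L, ∀ r ∈ R, l ⊓ r ≠ ⊥)
    {l1 l2 r1 r2 : Submodule ℝ V}
    (hl1 : l1 ∈ L) (hl2 : l2 ∈ L) (hr1 : r1 ∈ R) (hr2 : r2 ∈ R)
    (hl12 : l1 ⊓ l2 = ⊥) (hr12 : r1 ⊓ r2 = ⊥)
    (HL : ∀ l ∈ L, l1 ⊓ r1 ≤ l ∨ l2 ⊓ r2 ≤ l)
    (HR : ∀ r ∈ R, l1 ⊓ r1 ≤ r ∨ l2 ⊓ r2 ≤ r) :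
    ∃ P₁ P₂ a₁ a₂ : Submodule ℝ V,
      Module.finrank ℝ P₁ = 3 ∧ Module.finrank ℝ P₂ = 3 ∧
      Module.finrank ℝ a₁ = 1 ∧ Module.finrank ℝ a₂ = 1 ∧
      a₁ ≤ P₁ ⊓ P₂ ∧ a₂ ≤ P₁ ⊓ P₂ ∧
      (∀ l ∈ L, (l ≤ P₁ ∧ a₁ ≤ l) ∨ (l ≤ P₂ ∧ a₂ ≤ l)) ∧
      (∀ r ∈ R, (r ≤ P₁ ∧ a₂ ≤ r) ∨ (r ≤ P₂ ∧ a₁ ≤ r)) := by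
  have dl1 := hLdim l1 hl1
  have dl2 := hLdim l2 hl2
  have dr1 := hRdim r1 hr1
  have dr2 := hRdim r2 hr2
  have m11 := hmeet l1 hl1 r1 hr1
  have m12 := hmeet l1 hl1 r2 hr2
  have m21 := hmeet l2 hl2 r1 hr1
  have m22 := hmeet l2 hl2 r2 hr2
  obtain ⟨d11, d12, hl1e⟩ := transversal r1 r2 l1 hr12 dl1 m11 m12
  obtain ⟨d21, d22, hl2e⟩ := transversal r1 r2 l2 hr12 dl2 m21 m22
  obtain ⟨e11, e21, hr1e⟩ := transversal l1 l2 r1 hl12 dr1 (nbcomm m11) (nbcomm m21)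
  obtain ⟨e12, e22, hr2e⟩ := transversal l1 l2 r2 hl12 dr2 (nbcomm m12) (nbcomm m22)
  -- the two points
  set a1 := l1 ⊓ r1 with ha1def
  set a2 := l2 ⊓ r2 with ha2def
  -- the two planes
  have hnle1 : ¬ (a2 ≤ l1) := by
    intro h
    exact m22 (le_bot_iff.mp (hl12 ▸ le_inf h inf_le_left))
  have hnle2 : ¬ (a1 ≤ l2) := by
    intro h
    exact m11 (le_bot_iff.mp (hl12 ▸ le_inf inf_le_left h))
  have dP1 : finrank ℝ ↥(l1 ⊔ a2) = 3 := by rw [disj_sup d22 hnle1, dl1]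
  have dP2 : finrank ℝ ↥(l2 ⊔ a1) = 3 := by rw [disj_sup d11 hnle2, dl2]
  refine ⟨l1 ⊔ a2, l2 ⊔ a1, a1, a2, dP1, dP2, d11, d22,
    le_inf (inf_le_left.trans le_sup_left) le_sup_right,
    le_inf le_sup_right (inf_le_left.trans le_sup_left), ?_, ?_⟩
  · intro l hl
    obtain ⟨f1, f2, hle⟩ := transversal r1 r2 l hr12 (hLdim l hl)
      (hmeet l hl r1 hr1) (hmeet l hl r2 hr2)
    rcases HL l hl with h | h
    · left
      refine ⟨?_, h⟩
      have hfoot : a1 = l ⊓ r1 := eq_of_le_rank (le_inf h inf_le_right) (by omega)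
      have hr2P1 : r2 ≤ l1 ⊔ a2 := hr2e.ge.trans (sup_le
        (inf_le_right.trans le_sup_left)
        ((le_inf inf_le_right inf_le_left : r2 ⊓ l2 ≤ l2 ⊓ r2).trans le_sup_right))
      calc l = (l ⊓ r1) ⊔ (l ⊓ r2) := hle.symm
        _ ≤ l1 ⊔ a2 := sup_le (hfoot.ge.trans (inf_le_left.trans le_sup_left))
            (inf_le_right.trans hr2P1)
    · right
      refine ⟨?_, h⟩
      have hfoot : a2 = l ⊓ r2 := eq_of_le_rank (le_inf h inf_le_right) (by omega)
      have hr1P2 : r1 ≤ l2 ⊔ a1 := hr1e.ge.trans (sup_le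
        ((le_inf inf_le_right inf_le_left : r1 ⊓ l1 ≤ l1 ⊓ r1).trans le_sup_right)
        (inf_le_right.trans le_sup_left))
      calc l = (l ⊓ r1) ⊔ (l ⊓ r2) := hle.symm
        _ ≤ l2 ⊔ a1 := sup_le (inf_le_right.trans hr1P2)
            (hfoot.ge.trans (inf_le_left.trans le_sup_left))
  · intro r hr
    obtain ⟨g1, g2, hre⟩ := transversal l1 l2 r hl12 (hRdim r hr)
      (nbcomm (hmeet l1 hl1 r hr)) (nbcomm (hmeet l2 hl2 r hr))
    rcases HR r hr with h | h
    · right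
      refine ⟨?_, h⟩
      have hfoot : a1 = r ⊓ l1 := eq_of_le_rank (le_inf h inf_le_left) (by omega)
      calc r = (r ⊓ l1) ⊔ (r ⊓ l2) := hre.symm
        _ ≤ l2 ⊔ a1 := sup_le (hfoot.ge.trans le_sup_right)
            (inf_le_right.trans le_sup_left)
    · left
      refine ⟨?_, h⟩
      have hfoot : a2 = r ⊓ l2 := eq_of_le_rank (le_inf h inf_le_left) (by omega)
      calc r = (r ⊓ l1) ⊔ (r ⊓ l2) := hre.symm
        _ ≤ l1 ⊔ a2 := sup_le (inf_le_right.trans le_sup_left)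
            (hfoot.ge.trans le_sup_right)

end Assemble

section Branch

variable {V : Type*} [AddCommGroup V] [Module ℝ V] [FiniteDimensional ℝ V]

lemma branch (hV : finrank ℝ V = 4) (L R : Set (Submodule ℝ V))
    (hLdim : ∀ l ∈ L, finrank ℝ l = 2) (hRdim : ∀ r ∈ R, finrank ℝ r = 2)
    (hmeet : ∀ l ∈ L, ∀ r ∈ R, l ⊓ r ≠ ⊥)
    {l1 l2 r1 r2 l3 r3 : Submodule ℝ V}
    (hl1 : l1 ∈ L) (hl2 : l2 ∈ L) (hr1 : r1 ∈ R) (hr2 : r2 ∈ R)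
    (hl3 : l3 ∈ L) (hr3 : r3 ∈ R)
    (hl12 : l1 ⊓ l2 = ⊥) (hr12 : r1 ⊓ r2 = ⊥)
    (h3 : l1 ⊓ r1 ≤ l3) (hne3 : l3 ≠ l1) (hne31 : r3 ≠ r1) (hne32 : r3 ≠ r2) :
    ∃ P₁ P₂ a₁ a₂ : Submodule ℝ V,
      Module.finrank ℝ P₁ = 3 ∧ Module.finrank ℝ P₂ = 3 ∧
      Module.finrank ℝ a₁ = 1 ∧ Module.finrank ℝ a₂ = 1 ∧
      a₁ ≤ P₁ ⊓ P₂ ∧ a₂ ≤ P₁ ⊓ P₂ ∧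
      (∀ l ∈ L, (l ≤ P₁ ∧ a₁ ≤ l) ∨ (l ≤ P₂ ∧ a₂ ≤ l)) ∧
      (∀ r ∈ R, (r ≤ P₁ ∧ a₂ ≤ r) ∨ (r ≤ P₂ ∧ a₁ ≤ r)) := by
  have dl1 := hLdim l1 hl1
  have dl2 := hLdim l2 hl2
  have dl3 := hLdim l3 hl3
  have dr1 := hRdim r1 hr1
  have dr2 := hRdim r2 hr2
  have dr3 := hRdim r3 hr3
  have m11 := hmeet l1 hl1 r1 hr1
  have m12 := hmeet l1 hl1 r2 hr2
  have m21 := hmeet l2 hl2 r1 hr1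
  have m22 := hmeet l2 hl2 r2 hr2
  have HR : ∀ r ∈ R, l1 ⊓ r1 ≤ r ∨ l2 ⊓ r2 ≤ r := by
    intro r hr
    exact K2 hV dl1 dl2 dr1 dr2 dl3 (hRdim r hr) hl12 hr12 m11 m12 m21 m22
      (hmeet l3 hl3 r1 hr1) (hmeet l3 hl3 r2 hr2) h3 hne3
      (nbcomm (hmeet l1 hl1 r hr)) (nbcomm (hmeet l2 hl2 r hr))
      (nbcomm (hmeet l3 hl3 r hr))
  have HL : ∀ l ∈ L, l1 ⊓ r1 ≤ l ∨ l2 ⊓ r2 ≤ l := by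
    rcases HR r3 hr3 with h | h
    · intro l hl
      have := K2 hV dr1 dr2 dl1 dl2 dr3 (hLdim l hl) hr12 hl12
        (nbcomm m11) (nbcomm m21) (nbcomm m12) (nbcomm m22)
        (nbcomm (hmeet l1 hl1 r3 hr3)) (nbcomm (hmeet l2 hl2 r3 hr3))
        (by rwa [inf_comm r1 l1]) hne31
        (hmeet l hl r1 hr1) (hmeet l hl r2 hr2) (hmeet l hl r3 hr3)
      rcases this with h' | h'
      · exact Or.inl (by rwa [inf_comm l1 r1])
      · exact Or.inr (by rwa [inf_comm l2 r2])
    · intro l hl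
      have := K2 hV dr2 dr1 dl2 dl1 dr3 (hLdim l hl)
        (by rwa [inf_comm r2 r1]) (by rwa [inf_comm l2 l1])
        (nbcomm m22) (nbcomm m12) (nbcomm m21) (nbcomm m11)
        (nbcomm (hmeet l2 hl2 r3 hr3)) (nbcomm (hmeet l1 hl1 r3 hr3))
        (by rwa [inf_comm r2 l2]) hne32
        (hmeet l hl r2 hr2) (hmeet l hl r1 hr1) (hmeet l hl r3 hr3)
      rcases this with h' | h'
      · exact Or.inr (by rwa [inf_comm l2 r2])
      · exact Or.inl (by rwa [inf_comm l1 r1])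
  exact main4 hV L R hLdim hRdim hmeet hl1 hl2 hr1 hr2 hl12 hr12 HL HR

lemma exists_adj {α : Type*} {r : α → α → Prop} {a b : α}
    (h : Relation.ReflTransGen r a b) (hne : a ≠ b) : ∃ c, r a c ∧ c ≠ a := by
  induction h with
  | refl => exact absurd rfl hne
  | @tail b' c hab' hb'c ih =>
    by_cases hab : a = b'
    · subst hab
      exact ⟨c, hb'c, fun h => hne h.symm⟩
    · exact ih hab

end Branch

/-- Proposition 6.6: classification of interesting pairs of families of lines
in ℝP³ with connected ⋃L, up to interchanging L and R. -/
theorem classification_of_interesting_pairs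
    {V : Type*} [AddCommGroup V] [Module ℝ V] [FiniteDimensional ℝ V]
    (hV : Module.finrank ℝ V = 4)
    (L R : Set (Submodule ℝ V))
    (hLfin : L.Finite) (hRfin : R.Finite)
    (hLne : L.Nonempty) (hRne : R.Nonempty)
    (hLdim : ∀ l ∈ L, Module.finrank ℝ l = 2)
    (hRdim : ∀ r ∈ R, Module.finrank ℝ r = 2)
    (hmeet : ∀ l ∈ L, ∀ r ∈ R, l ⊓ r ≠ ⊥)
    (hconn : ∀ l ∈ L, ∀ l' ∈ L,
      Relation.ReflTransGen (fun x y => x ∈ L ∧ y ∈ L ∧ x ⊓ y ≠ ⊥) l l') :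
    InterestingPairCases L R ∨ InterestingPairCases R L := by
  by_cases hLpair : ∀ l ∈ L, ∀ l' ∈ L, l ⊓ l' ≠ ⊥
  · exact Or.inl (pairwise_case hV L R hLne hLdim hRdim hmeet hLpair)
  push_neg at hLpair
  obtain ⟨l1, hl1, l2, hl2, hl12⟩ := hLpair
  by_cases hRpair : ∀ r ∈ R, ∀ r' ∈ R, r ⊓ r' ≠ ⊥
  · refine Or.inr (pairwise_case hV R L hRne hRdim hLdim ?_ hRpair)
    intro r hr l hl
    exact nbcomm (hmeet l hl r hr)
  push_neg at hRpair
  obtain ⟨r1, hr1, r2, hr2, hr12⟩ := hRpair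
  have hr1r2 : r1 ≠ r2 := by
    intro h
    have h2 := hRdim r2 hr2
    rw [h, inf_idem] at hr12
    rw [hr12, finrank_bot] at h2
    omega
  by_cases hR2 : ∀ r ∈ R, r = r1 ∨ r = r2
  · right
    unfold InterestingPairCases
    refine Or.inr (Or.inr (Or.inr (Or.inr (Or.inr ⟨r1, r2, hr1r2, ?_, hr12, ?_⟩))))
    · ext x
      simp only [Set.mem_insert_iff, Set.mem_singleton_iff]
      constructor
      · exact fun hx => hR2 x hx
      · rintro (rfl | rfl) <;> assumption
    · intro l hl
      exact ⟨hmeet l hl r1 hr1, hmeet l hl r2 hr2⟩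
  push_neg at hR2
  obtain ⟨r3, hr3, hr31, hr32⟩ := hR2
  have hl1l2 : l1 ≠ l2 := by
    intro h
    have h2 := hLdim l2 hl2
    rw [h, inf_idem] at hl12
    rw [hl12, finrank_bot] at h2
    omega
  obtain ⟨l3, hrel, hl3ne⟩ := exists_adj (hconn l1 hl1 l2 hl2) hl1l2
  have hl3 : l3 ∈ L := hrel.2.1
  have hml31 : l3 ⊓ l1 ≠ ⊥ := nbcomm hrel.2.2
  have dl1 := hLdim l1 hl1
  have dl3 := hLdim l3 hl3
  have dr1 := hRdim r1 hr1
  have dr2 := hRdim r2 hr2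
  rcases K1 hV dl1 dl3 dr1 dr2 hr12 (hmeet l1 hl1 r1 hr1) (hmeet l1 hl1 r2 hr2)
    (hmeet l3 hl3 r1 hr1) (hmeet l3 hl3 r2 hr2) hml31 with h | h
  · left
    unfold InterestingPairCases
    exact Or.inr (Or.inr (Or.inr (Or.inl
      (branch hV L R hLdim hRdim hmeet hl1 hl2 hr1 hr2 hl3 hr3 hl12 hr12
        (h.symm.le.trans inf_le_left) hl3ne hr31 hr32))))
  · left
    unfold InterestingPairCases
    exact Or.inr (Or.inr (Or.inr (Or.inl
      (branch hV L R hLdim hRdim hmeet hl1 hl2 hr2 hr1 hl3 hr3 hl12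
        (by rwa [inf_comm r2 r1]) (h.symm.le.trans inf_le_left) hl3ne hr32 hr31))))
end

section
/- Let V be a 4-dimensional real vector space and let A, B, C, D be four pairwise distinct 1-dimensional linear subspaces of V with A ⊔ B ⊔ C ⊔ D = V (i.e. they span V). If M is a 2-dimensional linear subspace of V such that M ⊓ (A ⊔ B) ≠ ⊥, M ⊓ (B ⊔ C) ≠ ⊥, and M ⊓ (C ⊔ D) ≠ ⊥, then M ≤ A ⊔ B ⊔ C or M ≤ B ⊔ C ⊔ D. -/
open Submodule Module

lemma rank_one_gen' {V : Type*} [AddCommGroup V] [Module ℝ V]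
    (A : Submodule ℝ V) (hA : Module.finrank ℝ A = 1) :
    ∃ a : V, a ≠ 0 ∧ A = Submodule.span ℝ {a} := by
  obtain ⟨v, hv0, hv⟩ := finrank_eq_one_iff'.mp hA
  refine ⟨(v : V), by simpa using hv0, le_antisymm ?_ ?_⟩
  · intro x hx
    obtain ⟨c, hc⟩ := hv ⟨x, hx⟩
    have : c • (v : V) = x := congrArg Subtype.val hc
    rw [← this]
    exact Submodule.smul_mem _ _ (Submodule.mem_span_singleton_self _)
  · rw [Submodule.span_singleton_le_iff_mem]; exact v.2

lemma le_of_pair' {V : Type*} [AddCommGroup V] [Module ℝ V] [FiniteDimensional ℝ V]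
    (M : Submodule ℝ V) (hM : Module.finrank ℝ M = 2)
    {v w : V} (hvM : v ∈ M) (hwM : w ∈ M) (hv0 : v ≠ 0)
    (hind : w ∉ Submodule.span ℝ {v})
    {N : Submodule ℝ V} (hvN : v ∈ N) (hwN : w ∈ N) : M ≤ N := by
  have hw0 : w ≠ 0 := fun h => hind (h ▸ Submodule.zero_mem _)
  have hdisj : Disjoint (Submodule.span ℝ {v}) (Submodule.span ℝ {w}) := by
    exact (Submodule.disjoint_span_singleton' hw0).mpr hind
  have hle : Submodule.span ℝ {v} ⊔ Submodule.span ℝ {w} ≤ M :=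
    sup_le ((Submodule.span_singleton_le_iff_mem _ _).mpr hvM)
      ((Submodule.span_singleton_le_iff_mem _ _).mpr hwM)
  have hfr : Module.finrank ℝ (Submodule.span ℝ {v} ⊔ Submodule.span ℝ {w} : Submodule ℝ V) = 2 := by
    have := Submodule.finrank_sup_add_finrank_inf_eq (Submodule.span ℝ {v}) (Submodule.span ℝ {w})
    rw [hdisj.eq_bot, finrank_span_singleton hv0, finrank_span_singleton hw0] at this
    simpa using this
  have : Submodule.span ℝ {v} ⊔ Submodule.span ℝ {w} = M :=
    Submodule.eq_of_le_of_finrank_eq hle (by rw [hfr, hM])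
  rw [← this]
  exact sup_le ((Submodule.span_singleton_le_iff_mem _ _).mpr hvN)
    ((Submodule.span_singleton_le_iff_mem _ _).mpr hwN)

/-- Key step in the proof of Proposition 6.6: a projective line `M` in ℝP³
meeting the three lines `AB`, `BC` and `CD`, where the points `A, B, C, D`
span ℝP³, lies in the plane `ABC` or in the plane `BCD`. -/
theorem line_meeting_AB_BC_CD_lies_in_ABC_or_BCD
    {V : Type*} [AddCommGroup V] [Module ℝ V] [FiniteDimensional ℝ V]
    (hV : Module.finrank ℝ V = 4)
    (A B C D : Submodule ℝ V)
    (hA : Module.finrank ℝ A = 1) (hB : Module.finrank ℝ B = 1)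
    (hC : Module.finrank ℝ C = 1) (hD : Module.finrank ℝ D = 1)
    (hAB : A ≠ B) (hAC : A ≠ C) (hAD : A ≠ D)
    (hBC : B ≠ C) (hBD : B ≠ D) (hCD : C ≠ D)
    (hspan : A ⊔ B ⊔ C ⊔ D = ⊤)
    (M : Submodule ℝ V) (hM : Module.finrank ℝ M = 2)
    (h1 : M ⊓ (A ⊔ B) ≠ ⊥) (h2 : M ⊓ (B ⊔ C) ≠ ⊥) (h3 : M ⊓ (C ⊔ D) ≠ ⊥) :
    M ≤ A ⊔ B ⊔ C ∨ M ≤ B ⊔ C ⊔ D := by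
  obtain ⟨a, ha0, sA⟩ := rank_one_gen' A hA
  obtain ⟨b, hb0, sB⟩ := rank_one_gen' B hB
  obtain ⟨c, hc0, sC⟩ := rank_one_gen' C hC
  obtain ⟨d, hd0, sD⟩ := rank_one_gen' D hD
  set f : Fin 4 → V := ![a, b, c, d] with hf
  have hrange : Set.range f = {a, b, c, d} := by
    ext x
    simp only [hf, Matrix.range_cons, Matrix.range_empty, Set.union_empty, Set.union_singleton,
      Set.mem_insert_iff, Set.mem_singleton_iff, Set.mem_union]
    tauto
  have htop : ⊤ ≤ Submodule.span ℝ (Set.range f) := by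
    rw [hrange, ← hspan, sA, sB, sC, sD]
    rw [Submodule.span_insert, Submodule.span_insert, Submodule.span_insert]
    simp [sup_assoc]
  have li : LinearIndependent ℝ f :=
    linearIndependent_of_top_le_span_of_card_eq_finrank htop (by simp [hV])
  -- disjointness facts
  have dA : Disjoint A (B ⊔ C) := by
    have h := li.disjoint_span_image (s := {0}) (t := {1, 2}) (by simp)
    simpa [hf, Set.image_insert_eq, Set.image_singleton, Submodule.span_insert,
      ← sA, ← sB, ← sC] using h
  have dB : Disjoint B (C ⊔ D) := by
    have h := li.disjoint_span_image (s := {1}) (t := {2, 3}) (by simp)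
    simpa [hf, Set.image_insert_eq, Set.image_singleton, Submodule.span_insert,
      ← sB, ← sC, ← sD] using h
  -- intersection computations
  have eq1 : (A ⊔ B) ⊓ (B ⊔ C) = B := by
    rw [sup_comm A B, sup_inf_assoc_of_le A le_sup_left, dA.eq_bot, sup_bot_eq]
  have eq2 : (B ⊔ C) ⊓ (C ⊔ D) = C := by
    rw [sup_comm B C, sup_inf_assoc_of_le B le_sup_left, dB.eq_bot, sup_bot_eq]
  -- pick nonzero elements
  obtain ⟨p, hp, hp0⟩ := (Submodule.ne_bot_iff _).mp h1
  obtain ⟨q, hq, hq0⟩ := (Submodule.ne_bot_iff _).mp h2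
  obtain ⟨r, hr, hr0⟩ := (Submodule.ne_bot_iff _).mp h3
  have hpM : p ∈ M := hp.1
  have hpAB : p ∈ A ⊔ B := hp.2
  have hqM : q ∈ M := hq.1
  have hqBC : q ∈ B ⊔ C := hq.2
  have hrM : r ∈ M := hr.1
  have hrCD : r ∈ C ⊔ D := hr.2
  by_cases hqp : q ∈ Submodule.span ℝ {p}
  · -- q dependent on p ⇒ p ∈ B
    right
    obtain ⟨e, he⟩ := Submodule.mem_span_singleton.mp hqp
    have he0 : e ≠ 0 := by rintro rfl; simp at he; exact hq0 he.symm
    have hpBC : p ∈ B ⊔ C := by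
      have : p = e⁻¹ • q := by rw [← he, smul_smul, inv_mul_cancel₀ he0, one_smul]
      rw [this]; exact Submodule.smul_mem _ _ hqBC
    have hpB : p ∈ B := by rw [← eq1]; exact ⟨hpAB, hpBC⟩
    by_cases hrp : r ∈ Submodule.span ℝ {p}
    · exfalso
      obtain ⟨e', he'⟩ := Submodule.mem_span_singleton.mp hrp
      have he'0 : e' ≠ 0 := by rintro rfl; simp at he'; exact hr0 he'.symm
      have hpCD : p ∈ C ⊔ D := by
        have : p = e'⁻¹ • r := by rw [← he', smul_smul, inv_mul_cancel₀ he'0, one_smul]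
        rw [this]; exact Submodule.smul_mem _ _ hrCD
      exact hp0 (Submodule.disjoint_def.mp dB p hpB hpCD)
    · refine le_of_pair' M hM hpM hrM hp0 hrp ?_ ?_
      · exact Submodule.mem_sup_left (Submodule.mem_sup_left hpB)
      · have : C ⊔ D ≤ B ⊔ C ⊔ D := by rw [sup_assoc]; exact le_sup_right
        exact this hrCD
  · -- p, q independent ⇒ M = span{p,q} ≤ A ⊔ B ⊔ C
    left
    refine le_of_pair' M hM hpM hqM hp0 hqp ?_ ?_
    · exact Submodule.mem_sup_left hpAB
    · have : B ⊔ C ≤ A ⊔ B ⊔ C := sup_le_sup_right le_sup_right C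
      exact this hqBC
end

section
/- Let V be a 4-dimensional real vector space and let R₁, R₂ be 2-dimensional linear subspaces with R₁ ⊓ R₂ = ⊥. Let L be a finite family of 2-dimensional linear subspaces of V such that every l ∈ L satisfies l ⊓ R₁ ≠ ⊥ and l ⊓ R₂ ≠ ⊥, such that the graph with vertex set L and an edge between l, l' whenever l ⊓ l' ≠ ⊥ is connected, and such that neither does there exist a 1-dimensional subspace A₀ ≤ R₁ contained in every member of L, nor a 1-dimensional subspace B₀ ≤ R₂ contained in every member of L. Then there exist 1-dimensional subspaces A, C ≤ R₁ with A ≠ C and 1-dimensional subspaces B, D ≤ R₂ with B ≠ D such that A ⊔ B, C ⊔ B and C ⊔ D all belong to L. -/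
section CfAux
variable {V : Type*} [AddCommGroup V] [Module ℝ V] [FiniteDimensional ℝ V]

/-- first-change lemma along a path -/
lemma cf_first_change {α β : Type*} {r : α → α → Prop} (f : α → β) {u v : α}
    (h : Relation.ReflTransGen r u v) (hne : f u ≠ f v) :
    ∃ x y, r x y ∧ f x = f u ∧ f y ≠ f u := by
  induction h using Relation.ReflTransGen.head_induction_on with
  | refl => exact absurd rfl hne
  | head h' _ ih =>
    rename_i a c _
    by_cases hc : f c = f a
    · obtain ⟨x, y, hr, h1, h2⟩ := ih (by rw [hc]; exact hne)
      exact ⟨x, y, hr, h1.trans hc, fun h => h2 (h.trans hc.symm)⟩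
    · exact ⟨a, c, h', rfl, fun h => hc h⟩

lemma cf_rank_inf_one {R₁ R₂ l : Submodule ℝ V}
    (hR₁ : Module.finrank ℝ R₁ = 2)
    (hskew : R₁ ⊓ R₂ = ⊥) (hl : Module.finrank ℝ l = 2)
    (h1 : l ⊓ R₁ ≠ ⊥) (h2 : l ⊓ R₂ ≠ ⊥) :
    Module.finrank ℝ (l ⊓ R₁ : Submodule ℝ V) = 1 := by
  have hpos : 0 < Module.finrank ℝ (l ⊓ R₁ : Submodule ℝ V) := by
    rw [Nat.pos_iff_ne_zero, Ne, Submodule.finrank_eq_zero]; exact h1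
  have hle : Module.finrank ℝ (l ⊓ R₁ : Submodule ℝ V) ≤ 2 := by
    rw [← hl]; exact Submodule.finrank_mono inf_le_left
  rcases Nat.lt_or_ge (Module.finrank ℝ (l ⊓ R₁ : Submodule ℝ V)) 2 with h | h
  · omega
  · exfalso
    have heq : l ⊓ R₁ = l := Submodule.eq_of_le_of_finrank_le inf_le_left (by omega)
    have hlR : l = R₁ := by
      have : l ≤ R₁ := heq ▸ inf_le_right
      exact Submodule.eq_of_le_of_finrank_eq this (by rw [hl, hR₁])
    apply h2; rw [hlR, hskew]

/-- two distinct lines through origin in a plane span it -/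
lemma cf_sup_of_ne {A A' R : Submodule ℝ V}
    (hA : Module.finrank ℝ A = 1) (hA' : Module.finrank ℝ A' = 1)
    (hAR : A ≤ R) (hA'R : A' ≤ R) (hR : Module.finrank ℝ R = 2)
    (hne : A ≠ A') : A ⊔ A' = R := by
  have hinf : Module.finrank ℝ (A ⊓ A' : Submodule ℝ V) = 0 := by
    by_contra h
    have h1 : Module.finrank ℝ (A ⊓ A' : Submodule ℝ V) ≤ 1 := by
      rw [← hA]; exact Submodule.finrank_mono inf_le_left
    have h2 : Module.finrank ℝ (A ⊓ A' : Submodule ℝ V) = 1 := by omega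
    have e1 : A ⊓ A' = A := Submodule.eq_of_le_of_finrank_le inf_le_left (by omega)
    have e2 : A ⊓ A' = A' := Submodule.eq_of_le_of_finrank_le inf_le_right (by omega)
    exact hne (e1 ▸ e2)
  have hsup : Module.finrank ℝ (A ⊔ A' : Submodule ℝ V) = 2 := by
    have := Submodule.finrank_sup_add_finrank_inf_eq A A'
    omega
  exact Submodule.eq_of_le_of_finrank_eq (sup_le hAR hA'R) (by rw [hsup, hR])

/-- a line meeting both skew lines equals the span of its two intersection points -/
lemma cf_eq_sup {R₁ R₂ l : Submodule ℝ V}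
    (hskew : R₁ ⊓ R₂ = ⊥) (hl : Module.finrank ℝ l = 2)
    (hi1 : Module.finrank ℝ (l ⊓ R₁ : Submodule ℝ V) = 1)
    (hi2 : Module.finrank ℝ (l ⊓ R₂ : Submodule ℝ V) = 1) :
    (l ⊓ R₁) ⊔ (l ⊓ R₂) = l := by
  have hinf : (l ⊓ R₁) ⊓ (l ⊓ R₂) = ⊥ := by
    rw [← le_bot_iff, ← hskew]
    exact inf_le_inf inf_le_right inf_le_right
  have hsup : Module.finrank ℝ ((l ⊓ R₁) ⊔ (l ⊓ R₂) : Submodule ℝ V) = 2 := by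
    have := Submodule.finrank_sup_add_finrank_inf_eq (l ⊓ R₁) (l ⊓ R₂)
    rw [hinf] at this
    simp only [finrank_bot] at this
    omega
  exact Submodule.eq_of_le_of_finrank_eq (sup_le inf_le_left inf_le_left) (by rw [hsup, hl])

/-- edge lemma: two meeting lines share a point on `R₁` or on `R₂` -/
lemma cf_edge (hV : Module.finrank ℝ V = 4) {R₁ R₂ l l' : Submodule ℝ V}
    (hR₁ : Module.finrank ℝ R₁ = 2) (hR₂ : Module.finrank ℝ R₂ = 2)
    (hskew : R₁ ⊓ R₂ = ⊥)
    (hl : Module.finrank ℝ l = 2) (hl' : Module.finrank ℝ l' = 2)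
    (hi1 : Module.finrank ℝ (l ⊓ R₁ : Submodule ℝ V) = 1)
    (hi2 : Module.finrank ℝ (l ⊓ R₂ : Submodule ℝ V) = 1)
    (hi1' : Module.finrank ℝ (l' ⊓ R₁ : Submodule ℝ V) = 1)
    (hi2' : Module.finrank ℝ (l' ⊓ R₂ : Submodule ℝ V) = 1)
    (hmeets : l ⊓ l' ≠ ⊥) :
    l ⊓ R₁ = l' ⊓ R₁ ∨ l ⊓ R₂ = l' ⊓ R₂ := by
  by_contra h
  push_neg at h
  obtain ⟨h1, h2⟩ := h
  have hs1 : R₁ ≤ l ⊔ l' := by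
    rw [← cf_sup_of_ne hi1 hi1' inf_le_right inf_le_right hR₁ h1]
    exact sup_le_sup inf_le_left inf_le_left
  have hs2 : R₂ ≤ l ⊔ l' := by
    rw [← cf_sup_of_ne hi2 hi2' inf_le_right inf_le_right hR₂ h2]
    exact sup_le_sup inf_le_left inf_le_left
  have hRsup : Module.finrank ℝ (R₁ ⊔ R₂ : Submodule ℝ V) = 4 := by
    have := Submodule.finrank_sup_add_finrank_inf_eq R₁ R₂
    rw [hskew] at this
    simp only [finrank_bot] at this
    omega
  have h4 : Module.finrank ℝ (l ⊔ l' : Submodule ℝ V) = 4 := by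
    have hge : 4 ≤ Module.finrank ℝ (l ⊔ l' : Submodule ℝ V) := by
      rw [← hRsup]; exact Submodule.finrank_mono (sup_le hs1 hs2)
    have hle : Module.finrank ℝ (l ⊔ l' : Submodule ℝ V) ≤ 4 := by
      rw [← hV]; exact Submodule.finrank_le _
    omega
  have := Submodule.finrank_sup_add_finrank_inf_eq l l'
  rw [h4] at this
  have : Module.finrank ℝ (l ⊓ l' : Submodule ℝ V) = 0 := by omega
  exact hmeets (Submodule.finrank_eq_zero.mp this)

end CfAux

/-- Combinatorial step in the proof of Proposition 6.6: a connected family of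
lines, each meeting two given skew lines `R₁` and `R₂`, and not all passing
through a common point of `R₁` nor through a common point of `R₂`, contains
three lines `AB`, `CB`, `CD` with `A, C ∈ R₁` and `B, D ∈ R₂`. -/
theorem connected_family_meeting_two_skew_lines
    {V : Type*} [AddCommGroup V] [Module ℝ V] [FiniteDimensional ℝ V]
    (hV : Module.finrank ℝ V = 4)
    (R₁ R₂ : Submodule ℝ V)
    (hR₁ : Module.finrank ℝ R₁ = 2) (hR₂ : Module.finrank ℝ R₂ = 2)
    (hskew : R₁ ⊓ R₂ = ⊥)
    (L : Set (Submodule ℝ V)) (hLfin : L.Finite)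
    (hLdim : ∀ l ∈ L, Module.finrank ℝ l = 2)
    (hmeet : ∀ l ∈ L, l ⊓ R₁ ≠ ⊥ ∧ l ⊓ R₂ ≠ ⊥)
    (hconn : ∀ l ∈ L, ∀ l' ∈ L,
      Relation.ReflTransGen (fun x y => x ∈ L ∧ y ∈ L ∧ x ⊓ y ≠ ⊥) l l')
    (hnoA : ¬ ∃ A₀ : Submodule ℝ V, Module.finrank ℝ A₀ = 1 ∧ A₀ ≤ R₁ ∧
      ∀ l ∈ L, A₀ ≤ l)
    (hnoB : ¬ ∃ B₀ : Submodule ℝ V, Module.finrank ℝ B₀ = 1 ∧ B₀ ≤ R₂ ∧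
      ∀ l ∈ L, B₀ ≤ l) :
    ∃ A C B D : Submodule ℝ V,
      Module.finrank ℝ A = 1 ∧ Module.finrank ℝ C = 1 ∧
      Module.finrank ℝ B = 1 ∧ Module.finrank ℝ D = 1 ∧
      A ≤ R₁ ∧ C ≤ R₁ ∧ B ≤ R₂ ∧ D ≤ R₂ ∧ A ≠ C ∧ B ≠ D ∧
      A ⊔ B ∈ L ∧ C ⊔ B ∈ L ∧ C ⊔ D ∈ L := by
  -- notation
  set r : Submodule ℝ V → Submodule ℝ V → Prop :=
    fun x y => x ∈ L ∧ y ∈ L ∧ x ⊓ y ≠ ⊥ with hr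
  have hskew' : R₂ ⊓ R₁ = ⊥ := by rw [inf_comm]; exact hskew
  have ha1 : ∀ l ∈ L, Module.finrank ℝ (l ⊓ R₁ : Submodule ℝ V) = 1 := fun l hl =>
    cf_rank_inf_one hR₁ hskew (hLdim l hl) (hmeet l hl).1 (hmeet l hl).2
  have hb1 : ∀ l ∈ L, Module.finrank ℝ (l ⊓ R₂ : Submodule ℝ V) = 1 := fun l hl =>
    cf_rank_inf_one hR₂ hskew' (hLdim l hl) (hmeet l hl).2 (hmeet l hl).1
  have hdec : ∀ l ∈ L, (l ⊓ R₁) ⊔ (l ⊓ R₂) = l := fun l hl =>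
    cf_eq_sup hskew (hLdim l hl) (ha1 l hl) (hb1 l hl)
  have hedge : ∀ {x y : Submodule ℝ V}, r x y →
      x ⊓ R₁ = y ⊓ R₁ ∨ x ⊓ R₂ = y ⊓ R₂ := by
    rintro x y ⟨hx, hy, hxy⟩
    exact cf_edge hV hR₁ hR₂ hskew (hLdim x hx) (hLdim y hy)
      (ha1 x hx) (hb1 x hx) (ha1 y hy) (hb1 y hy) hxy
  -- L nonempty
  -- L nonempty
  obtain ⟨l₀, hl₀⟩ : ∃ l, l ∈ L := by
    by_contra h
    push_neg at h
    apply hnoA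
    have hR₁ne : R₁ ≠ ⊥ := by
      intro hb
      rw [hb, finrank_bot] at hR₁
      exact absurd hR₁ (by norm_num)
    obtain ⟨v, hv, hv0⟩ := R₁.ne_bot_iff.mp hR₁ne
    exact ⟨Submodule.span ℝ {v}, finrank_span_singleton hv0,
      (Submodule.span_singleton_le_iff_mem v R₁).mpr hv, fun l hl => absurd hl (h l)⟩
  -- the map `l ↦ l ⊓ R₁` is not constant on `L`
  obtain ⟨m, hm, hmne⟩ : ∃ m ∈ L, m ⊓ R₁ ≠ l₀ ⊓ R₁ := by
    by_contra h
    push_neg at h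
    exact hnoA ⟨l₀ ⊓ R₁, ha1 l₀ hl₀, inf_le_right,
      fun l hl => (h l hl) ▸ (inf_le_left : l ⊓ R₁ ≤ l)⟩
  -- find an edge along which `· ⊓ R₁` changes
  obtain ⟨x₁, y₁, hr₁, hfx₁, hfy₁⟩ :=
    cf_first_change (· ⊓ R₁) (hconn l₀ hl₀ m hm) (fun h => hmne h.symm)
  have haxy : x₁ ⊓ R₁ ≠ y₁ ⊓ R₁ := fun h => hfy₁ (h.symm.trans hfx₁)
  have hbxy : x₁ ⊓ R₂ = y₁ ⊓ R₂ := (hedge hr₁).resolve_left haxy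
  -- the map `l ↦ l ⊓ R₂` is not constantly `x₁ ⊓ R₂` on `L`
  obtain ⟨m', hm', hm'ne⟩ : ∃ m' ∈ L, m' ⊓ R₂ ≠ x₁ ⊓ R₂ := by
    by_contra h
    push_neg at h
    refine hnoB ⟨x₁ ⊓ R₂, hb1 x₁ hr₁.1, inf_le_right, fun l hl => ?_⟩
    rw [← h l hl]; exact inf_le_left
  -- find an edge along which `· ⊓ R₂` changes, starting from `x₁`
  obtain ⟨x, y, hrxy, hfx, hfy⟩ :=
    cf_first_change (· ⊓ R₂) (hconn x₁ hr₁.1 m' hm') (fun h => hm'ne h.symm)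
  have hbxy2 : x ⊓ R₂ ≠ y ⊓ R₂ := fun h => hfy (h.symm.trans hfx)
  have haxy2 : x ⊓ R₁ = y ⊓ R₁ := (hedge hrxy).resolve_right hbxy2
  have hxL : x ∈ L := hrxy.1
  have hyL : y ∈ L := hrxy.2.1
  have hx₁L : x₁ ∈ L := hr₁.1
  have hy₁L : y₁ ∈ L := hr₁.2.1
  have hBD : x₁ ⊓ R₂ ≠ y ⊓ R₂ := fun h => hfy h.symm
  have hxdec : (x ⊓ R₁) ⊔ (x₁ ⊓ R₂) = x := by rw [← hfx]; exact hdec x hxL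
  have hydec : (x ⊓ R₁) ⊔ (y ⊓ R₂) = y := by rw [haxy2]; exact hdec y hyL
  -- choose `z ∈ {x₁, y₁}` whose point on `R₁` differs from `x ⊓ R₁`
  by_cases hcase : x₁ ⊓ R₁ = x ⊓ R₁
  · refine ⟨y₁ ⊓ R₁, x ⊓ R₁, x₁ ⊓ R₂, y ⊓ R₂,
      ha1 y₁ hy₁L, ha1 x hxL, hb1 x₁ hx₁L, hb1 y hyL,
      inf_le_right, inf_le_right, inf_le_right, inf_le_right,
      fun h => haxy (hcase.trans h.symm), hBD, ?_, ?_, ?_⟩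
    · rw [hbxy, hdec y₁ hy₁L]; exact hy₁L
    · rw [hxdec]; exact hxL
    · rw [hydec]; exact hyL
  · refine ⟨x₁ ⊓ R₁, x ⊓ R₁, x₁ ⊓ R₂, y ⊓ R₂,
      ha1 x₁ hx₁L, ha1 x hxL, hb1 x₁ hx₁L, hb1 y hyL,
      inf_le_right, inf_le_right, inf_le_right, inf_le_right,
      hcase, hBD, ?_, ?_, ?_⟩
    · rw [hdec x₁ hx₁L]; exact hx₁L
    · rw [hxdec]; exact hxL
    · rw [hydec]; exact hyL
end

section
/- Let n and k be natural numbers with k ≥ 1, and for each i ∈ {0, 1, …, k} let χ_i : ℤ → (Fin k → ℕ) → ℤ be a function. Assume: (a) for every i, every integer p and every β : Fin k → ℕ, if p < 0 or p > n then χ_i p β = 0; and (b) for every i with 1 ≤ i ≤ k, every integer p ≥ 0 and every β : Fin k → ℕ, χ_i p β = Σ_{j=0}^{n} (−1)^j * ( χ_{i−1} (p+j+1) (β + (j+1)·e_i) − χ_{i−1} (p+j+1) (β + j·e_i) ), where e_i : Fin k → ℕ is the i-th standard basis vector. Then for every integer p ≥ 0: χ_k p 0 = Σ_{β : Fin k →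 ℕ with Σᵢ β i ≤ n} (−1)^{Σᵢ β i} * Σ_{γ : Fin k → {0,1}} (−1)^{k − Σᵢ γ i} * χ_0 (p + Σᵢ β i + k) (β + γ). -/
lemma piFinset_split {k : ℕ} (i : ℕ) (hi : 1 ≤ i) (hik : i ≤ k) (idx : Fin k)
    (hidxv : (idx : ℕ) = i - 1) (s : Finset ℕ)
    (F : (Fin k → ℕ) → ℤ) :
    ∑ x ∈ Fintype.piFinset (fun m : Fin k => if (m : ℕ) < i then s else {0}), F x
      = ∑ c ∈ s, ∑ x ∈ Fintype.piFinset
            (fun m : Fin k => if (m : ℕ) < i - 1 then s else {0}),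
          F (Function.update x idx c) := by
  rw [← Finset.sum_product']
  refine Finset.sum_nbij' (fun x => (x idx, Function.update x idx 0))
    (fun q => Function.update q.2 idx q.1) ?_ ?_ ?_ ?_ ?_
  · intro x hx
    rw [Fintype.mem_piFinset] at hx
    rw [Finset.mem_product]
    dsimp only
    constructor
    · have := hx idx
      rw [if_pos (by omega)] at this
      exact this
    · rw [Fintype.mem_piFinset]
      intro m
      by_cases hm : m = idx
      · subst hm
        rw [Function.update_self, if_neg (by omega)]
        simp
      · rw [Function.update_of_ne hm]
        have := hx m
        have hmv : (m : ℕ) ≠ i - 1 := fun h => hm (Fin.ext (by omega))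
        by_cases h1 : (m : ℕ) < i - 1
        · rw [if_pos h1]; rw [if_pos (by omega)] at this; exact this
        · rw [if_neg h1]
          by_cases h2 : (m : ℕ) < i
          · omega
          · rw [if_neg h2] at this; exact this
  · intro q hq
    rw [Finset.mem_product] at hq
    obtain ⟨h1, h2⟩ := hq
    rw [Fintype.mem_piFinset] at h2 ⊢
    intro m
    by_cases hm : m = idx
    · subst hm
      rw [Function.update_self, if_pos (by omega)]
      exact h1
    · rw [Function.update_of_ne hm]
      have := h2 m
      have hmv : (m : ℕ) ≠ i - 1 := fun h => hm (Fin.ext (by omega))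
      by_cases hlt : (m : ℕ) < i - 1
      · rw [if_pos (by omega)]; rw [if_pos hlt] at this; exact this
      · rw [if_neg (by omega)]; rw [if_neg hlt] at this; exact this
  · intro x hx
    dsimp only
    funext m
    by_cases hm : m = idx
    · subst hm; simp
    · simp [Function.update_of_ne hm]
  · intro q hq
    rw [Finset.mem_product, Fintype.mem_piFinset] at hq
    have hq2 := hq.2 idx
    rw [if_neg (by omega)] at hq2
    simp only [Finset.mem_singleton] at hq2
    rw [Function.update_self, Function.update_idem]
    rw [← hq2, Function.update_eq_self]
  · intro x hx
    dsimp only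
    congr 1
    rw [Function.update_idem, Function.update_eq_self]

lemma sum_le_of_mem_Q {k : ℕ} (t : ℕ) (γ : Fin k → ℕ)
    (hγ : γ ∈ Fintype.piFinset
      (fun m : Fin k => if (m : ℕ) < t then ({0, 1} : Finset ℕ) else {0})) :
    ∑ m, γ m ≤ t := by
  rw [Fintype.mem_piFinset] at hγ
  calc ∑ m, γ m ≤ ∑ m : Fin k, (if (m : ℕ) < t then 1 else 0) := by
        refine Finset.sum_le_sum fun m _ => ?_
        have := hγ m
        by_cases h : (m : ℕ) < t
        · rw [if_pos h] at this ⊢; simp at this; omega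
        · rw [if_neg h] at this ⊢; simp at this; omega
    _ = (Finset.univ.filter (fun m : Fin k => (m : ℕ) < t)).card := by
        simp [Finset.sum_ite, Finset.sum_const]
    _ ≤ (Finset.range t).card := by
        refine Finset.card_le_card_of_injOn (fun m => (m : ℕ)) ?_ ?_
        · intro m hm; simp at hm ⊢; exact hm
        · intro a _ b _ h; exact Fin.ext h
    _ = t := Finset.card_range t

lemma sum_update_zero' {k : ℕ} (x : Fin k → ℕ) (idx : Fin k) (h : x idx = 0) (c : ℕ) :
    ∑ m, Function.update x idx c m = c + ∑ m, x m := by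
  rw [Finset.sum_update_of_mem (Finset.mem_univ idx)]
  rw [Finset.sdiff_singleton_eq_erase]
  congr 1
  exact Finset.sum_erase _ h

/-- Combinatorial content of Corollary 3.11: iterating the Danilov–Khovanskii
recursion (Lemma 3.10) `k` times expresses `χ_k p 0` in terms of the data
`χ_0` on the ambient variety. Here `χ i p β` stands for
`χ(Ω_i^p ⊗ I₁^{β₁} ⊗ … ⊗ I_k^{β_k})`, and `e i` is the `i`-th standard basis
vector of `Fin k → ℕ` (for `1 ≤ i ≤ k`). -/
theorem chi_k_in_terms_of_chi_zero
    (n k : ℕ) (hk : 1 ≤ k)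
    (χ : ℕ → ℤ → (Fin k → ℕ) → ℤ)
    (e : ℕ → (Fin k → ℕ))
    (he : ∀ i : ℕ, 1 ≤ i → i ≤ k → ∀ m : Fin k,
      e i m = if (m : ℕ) + 1 = i then 1 else 0)
    -- (a) vanishing outside the range 0 ≤ p ≤ n
    (ha : ∀ i : ℕ, i ≤ k → ∀ p : ℤ, ∀ β : Fin k → ℕ,
      (p < 0 ∨ p > (n : ℤ)) → χ i p β = 0)
    -- (b) the recursion of Lemma 3.10
    (hb : ∀ i : ℕ, 1 ≤ i → i ≤ k → ∀ p : ℤ, 0 ≤ p → ∀ β : Fin k → ℕ,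
      χ i p β = ∑ j ∈ Finset.range (n + 1), (-1 : ℤ) ^ j *
        (χ (i - 1) (p + (j : ℤ) + 1) (β + (j + 1) • e i)
          - χ (i - 1) (p + (j : ℤ) + 1) (β + j • e i))) :
    ∀ p : ℤ, 0 ≤ p →
      χ k p 0 =
        ∑ β ∈ (Fintype.piFinset fun _ : Fin k => Finset.range (n + 1)).filter
            (fun β => ∑ i, β i ≤ n),
          (-1 : ℤ) ^ (∑ i, β i) *
            ∑ γ ∈ Fintype.piFinset fun _ : Fin k => ({0, 1} : Finset ℕ),
              (-1 : ℤ) ^ (k - ∑ i, γ i) *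
                χ 0 (p + (∑ i, β i : ℕ) + (k : ℤ)) (β + γ) := by
  have key : ∀ i : ℕ, i ≤ k → ∀ p : ℤ, 0 ≤ p → ∀ β : Fin k → ℕ,
      χ i p β =
        ∑ β' ∈ Fintype.piFinset
            (fun m : Fin k => if (m : ℕ) < i then Finset.range (n + 1) else {0}),
          (-1 : ℤ) ^ (∑ m, β' m) *
            ∑ γ ∈ Fintype.piFinset
                (fun m : Fin k => if (m : ℕ) < i then ({0, 1} : Finset ℕ) else {0}),
              (-1 : ℤ) ^ (i - ∑ m, γ m) *
                χ 0 (p + (∑ m, β' m : ℕ) + (i : ℕ)) (β + β' + γ) := by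
    intro i
    induction i with
    | zero =>
      intro _ p hp β
      have h0 : ∀ s : Finset ℕ,
          Fintype.piFinset (fun m : Fin k => if (m : ℕ) < 0 then s else ({0} : Finset ℕ))
            = {0} := by
        intro s
        ext x
        simp [Fintype.mem_piFinset, funext_iff]
      rw [h0, h0, Finset.sum_singleton, Finset.sum_singleton]
      simp
    | succ t ih =>
      intro hik p hp β
      have ht : t ≤ k := Nat.le_of_succ_le hik
      obtain ⟨idx, hiv⟩ : ∃ idx : Fin k, (idx : ℕ) = t := ⟨⟨t, by omega⟩, rfl⟩
      have he' : ∀ m : Fin k, e (t + 1) m = if (m : ℕ) + 1 = t + 1 then 1 else 0 :=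
        he (t + 1) (Nat.le_add_left 1 t) hik
      rw [hb (t + 1) (by omega) hik p hp β]
      simp only [Nat.add_sub_cancel]
      rw [piFinset_split (t + 1) (by omega) hik idx (by omega) (Finset.range (n + 1))]
      simp only [Nat.add_sub_cancel]
      refine Finset.sum_congr rfl fun j hj => ?_
      have hpj : (0 : ℤ) ≤ p + (j : ℤ) + 1 := by omega
      rw [ih ht (p + (j : ℤ) + 1) hpj (β + (j + 1) • e (t + 1)),
        ih ht (p + (j : ℤ) + 1) hpj (β + j • e (t + 1))]
      rw [← Finset.sum_sub_distrib, Finset.mul_sum]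
      refine Finset.sum_congr rfl fun β' hβ' => ?_
      have hβ'0 : β' idx = 0 := by
        rw [Fintype.mem_piFinset] at hβ'
        have := hβ' idx
        rw [if_neg (by omega)] at this
        simpa using this
      have hsum : ∑ m, Function.update β' idx j m = j + ∑ m, β' m :=
        sum_update_zero' β' idx hβ'0 j
      rw [piFinset_split (t + 1) (by omega) hik idx (by omega) ({0, 1} : Finset ℕ)]
      simp only [Nat.add_sub_cancel]
      rw [Finset.sum_pair (by norm_num : (0 : ℕ) ≠ 1)]
      rw [hsum]
      -- termwise identifications of the two inner sums
      have hA : ∑ γ ∈ Fintype.piFinset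
            (fun m : Fin k => if (m : ℕ) < t then ({0, 1} : Finset ℕ) else {0}),
          (-1 : ℤ) ^ (t - ∑ m, γ m) *
            χ 0 (p + (j : ℤ) + 1 + (∑ m, β' m : ℕ) + (t : ℕ))
              (β + (j + 1) • e (t + 1) + β' + γ)
          = ∑ γ ∈ Fintype.piFinset
              (fun m : Fin k => if (m : ℕ) < t then ({0, 1} : Finset ℕ) else {0}),
            (-1 : ℤ) ^ (t + 1 - ∑ m, Function.update γ idx 1 m) *
              χ 0 (p + ((j + ∑ m, β' m : ℕ) : ℤ) + ((t + 1 : ℕ) : ℤ))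
                (β + Function.update β' idx j + Function.update γ idx 1) := by
        refine Finset.sum_congr rfl fun γ hγ => ?_
        have hγ0 : γ idx = 0 := by
          rw [Fintype.mem_piFinset] at hγ
          have := hγ idx
          rw [if_neg (by omega)] at this
          simpa using this
        have hγs : ∑ m, γ m ≤ t := sum_le_of_mem_Q t γ hγ
        have hγu : ∑ m, Function.update γ idx 1 m = 1 + ∑ m, γ m :=
          sum_update_zero' γ idx hγ0 1
        rw [hγu]
        congr 1
        · congr 1
          omega
        · congr 1
          · push_cast; ring
          · funext m
            by_cases hm : m = idx
            · rw [hm]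
              simp only [Pi.add_apply, Pi.smul_apply, smul_eq_mul, Function.update_self]
              rw [he' idx, if_pos (by omega), hβ'0, hγ0]
              omega
            · have hmv : (m : ℕ) ≠ t := fun h => hm (Fin.ext (h.trans hiv.symm))
              simp only [Pi.add_apply, Pi.smul_apply, smul_eq_mul,
                Function.update_of_ne hm]
              rw [he' m, if_neg (by omega)]
              ring
      have hB : ∑ γ ∈ Fintype.piFinset
            (fun m : Fin k => if (m : ℕ) < t then ({0, 1} : Finset ℕ) else {0}),
          (-1 : ℤ) ^ (t - ∑ m, γ m) *
            χ 0 (p + (j : ℤ) + 1 + (∑ m, β' m : ℕ) + (t : ℕ))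
              (β + j • e (t + 1) + β' + γ)
          = - ∑ γ ∈ Fintype.piFinset
              (fun m : Fin k => if (m : ℕ) < t then ({0, 1} : Finset ℕ) else {0}),
            (-1 : ℤ) ^ (t + 1 - ∑ m, Function.update γ idx 0 m) *
              χ 0 (p + ((j + ∑ m, β' m : ℕ) : ℤ) + ((t + 1 : ℕ) : ℤ))
                (β + Function.update β' idx j + Function.update γ idx 0) := by
        rw [← Finset.sum_neg_distrib]
        refine Finset.sum_congr rfl fun γ hγ => ?_
        have hγ0 : γ idx = 0 := by
          rw [Fintype.mem_piFinset] at hγ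
          have := hγ idx
          rw [if_neg (by clear hA; omega)] at this
          simpa using this
        have hγs : ∑ m, γ m ≤ t := sum_le_of_mem_Q t γ hγ
        have hγe : Function.update γ idx 0 = γ := by
          rw [← hγ0, Function.update_eq_self]
        rw [hγe]
        have hexp : t + 1 - ∑ m, γ m = (t - ∑ m, γ m) + 1 := by clear hA; omega
        rw [hexp, pow_succ]
        have harg : p + (j : ℤ) + 1 + (∑ m, β' m : ℕ) + (t : ℕ)
            = p + ((j + ∑ m, β' m : ℕ) : ℤ) + ((t + 1 : ℕ) : ℤ) := by
          push_cast; ring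
        have hfun : β + j • e (t + 1) + β' + γ = β + Function.update β' idx j + γ := by
          funext m
          by_cases hm : m = idx
          · rw [hm]
            simp only [Pi.add_apply, Pi.smul_apply, smul_eq_mul, Function.update_self]
            rw [he' idx, if_pos (by clear hA; omega), hβ'0, hγ0]
            clear hA; omega
          · have hmv : (m : ℕ) ≠ t := fun h => hm (Fin.ext (h.trans hiv.symm))
            simp only [Pi.add_apply, Pi.smul_apply, smul_eq_mul,
              Function.update_of_ne hm]
            rw [he' m, if_neg (by clear hA; omega)]
            ring
        rw [harg, hfun]
        ring
      rw [hA, hB, pow_add]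
      ring
  intro p hp
  rw [key k le_rfl p hp 0]
  have hPk : (fun m : Fin k => if (m : ℕ) < k then Finset.range (n + 1) else ({0} : Finset ℕ))
      = fun _ : Fin k => Finset.range (n + 1) := by
    funext m; rw [if_pos m.isLt]
  have hQk : (fun m : Fin k => if (m : ℕ) < k then ({0, 1} : Finset ℕ) else ({0} : Finset ℕ))
      = fun _ : Fin k => ({0, 1} : Finset ℕ) := by
    funext m; rw [if_pos m.isLt]
  rw [hPk, hQk]
  rw [Finset.sum_filter_of_ne]
  · refine Finset.sum_congr rfl fun β hβ => ?_
    congr 1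
    refine Finset.sum_congr rfl fun γ hγ => ?_
    rw [zero_add]
  · intro β hβ hne
    by_contra hgt
    apply hne
    rw [mul_eq_zero]
    right
    refine Finset.sum_eq_zero fun γ hγ => ?_
    rw [ha 0 (Nat.zero_le k) _ _ (Or.inr (by clear hne; omega)), mul_zero]
end

section
/- Let V be a real vector space and B a symmetric bilinear form on V. Then the following are equivalent: (i) every linear subspace of V on which B is positive definite has dimension at most 1; (ii) for all α₁, α₂ ∈ V with B α₁ α₁ ≥ 0, one has (B α₁ α₂)² ≥ (B α₁ α₁) * (B α₂ α₂). -/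
/-- Equivalence of parts (1) and (2) of Theorem 4.15: for a symmetric bilinear
form `B` on a real vector space, the Hodge index property — every subspace on
which `B` is positive definite has dimension at most 1 — is equivalent to the
Alexandrov–Fenchel inequality: `B α₁ α₁ ≥ 0` implies
`(B α₁ α₂)² ≥ (B α₁ α₁)·(B α₂ α₂)`. -/
theorem hodge_index_iff_alexandrov_fenchel
    {V : Type*} [AddCommGroup V] [Module ℝ V]
    (B : LinearMap.BilinForm ℝ V)
    (hsymm : ∀ v w : V, B v w = B w v) :
    (∀ W : Submodule ℝ V, (∀ w ∈ W, w ≠ 0 → 0 < B w w) →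
        Module.rank ℝ W ≤ 1) ↔
      (∀ α₁ α₂ : V, 0 ≤ B α₁ α₁ → (B α₁ α₁) * (B α₂ α₂) ≤ (B α₁ α₂) ^ 2) := by
  constructor
  · -- Hodge index ⇒ Alexandrov–Fenchel
    intro h α₁ α₂ h₁
    by_contra hc
    push_neg at hc
    set q₁ := B α₁ α₁ with hq₁
    set q₂ := B α₂ α₂ with hq₂
    set c := B α₁ α₂ with hcdef
    have hq₁pos : 0 < q₁ := by
      rcases lt_or_eq_of_le h₁ with h | h
      · exact h
      · exfalso; rw [← h, zero_mul] at hc; nlinarith [sq_nonneg c]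
    -- the span of α₁, α₂ is positive definite
    set W := Submodule.span ℝ {α₁, α₂} with hW
    have hα₁ : α₁ ≠ 0 := by
      rintro rfl; simp [hq₁] at hq₁pos
    have hpos : ∀ w ∈ W, w ≠ 0 → 0 < B w w := by
      intro w hw hw0
      obtain ⟨a, b, rfl⟩ := Submodule.mem_span_pair.mp hw
      have hexp : B (a • α₁ + b • α₂) (a • α₁ + b • α₂)
          = a ^ 2 * q₁ + 2 * (a * b) * c + b ^ 2 * q₂ := by
        simp only [map_add, map_smul, LinearMap.add_apply, LinearMap.smul_apply,
          smul_eq_mul, hq₁, hq₂, hcdef]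
        rw [hsymm α₂ α₁]; ring
      have key : q₁ * B (a • α₁ + b • α₂) (a • α₁ + b • α₂)
          = (a * q₁ + b * c) ^ 2 + b ^ 2 * (q₁ * q₂ - c ^ 2) := by
        rw [hexp]; ring
      rcases eq_or_ne b 0 with hb | hb
      · have ha : a ≠ 0 := by
          rintro rfl; simp [hb] at hw0
        have : (a * q₁ + b * c) ^ 2 > 0 := by
          have : a * q₁ + b * c ≠ 0 := by
            rw [hb]; simpa using mul_ne_zero ha (ne_of_gt hq₁pos)
          positivity
        nlinarith
      · have h1 : b ^ 2 * (q₁ * q₂ - c ^ 2) > 0 := by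
          have : (0:ℝ) < b ^ 2 := by positivity
          nlinarith
        nlinarith [sq_nonneg (a * q₁ + b * c)]
    obtain ⟨v₀, hv₀⟩ := (rank_submodule_le_one_iff' W).mp (h W hpos)
    obtain ⟨r, hr⟩ := Submodule.mem_span_singleton.mp
      (hv₀ (Submodule.subset_span (by simp : α₁ ∈ ({α₁, α₂} : Set V))))
    obtain ⟨s, hs⟩ := Submodule.mem_span_singleton.mp
      (hv₀ (Submodule.subset_span (by simp : α₂ ∈ ({α₁, α₂} : Set V))))
    have e₁ : q₁ = r ^ 2 * B v₀ v₀ := by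
      show B α₁ α₁ = _; rw [← hr]; simp [smul_eq_mul]; ring
    have e₂ : q₂ = s ^ 2 * B v₀ v₀ := by
      show B α₂ α₂ = _; rw [← hs]; simp [smul_eq_mul]; ring
    have e₃ : c = r * s * B v₀ v₀ := by
      show B α₁ α₂ = _; rw [← hr, ← hs]; simp [smul_eq_mul]; ring
    have : c ^ 2 = q₁ * q₂ := by rw [e₁, e₂, e₃]; ring
    linarith
  · -- Alexandrov–Fenchel ⇒ Hodge index
    intro hAF W hW
    rcases em (∃ w₁ ∈ W, w₁ ≠ (0:V)) with ⟨w₁, hw₁W, hw₁⟩ | hnone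
    · have hq₁ : 0 < B w₁ w₁ := hW w₁ hw₁W hw₁
      refine (rank_submodule_le_one_iff W).mpr ⟨w₁, hw₁W, ?_⟩
      intro w hw
      set c := B w₁ w with hc
      set v := w - (c / B w₁ w₁) • w₁ with hv
      have hvW : v ∈ W := Submodule.sub_mem W hw (Submodule.smul_mem W _ hw₁W)
      have hBv : B v v ≤ 0 := by
        have hAF' := hAF w₁ w hq₁.le
        have hexp : B v v = B w w - 2 * (c / B w₁ w₁) * c
            + (c / B w₁ w₁) ^ 2 * B w₁ w₁ := by
          simp only [hv, map_sub, map_smul, LinearMap.sub_apply, LinearMap.smul_apply,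
            smul_eq_mul, hc]
          rw [hsymm w w₁]; ring
        rw [hexp]
        have hle : B w w ≤ c ^ 2 / B w₁ w₁ :=
          (le_div_iff₀ hq₁).mpr (by nlinarith [hAF'])
        have h2 : 2 * (c / B w₁ w₁) * c = 2 * (c ^ 2 / B w₁ w₁) := by ring
        have h3 : (c / B w₁ w₁) ^ 2 * B w₁ w₁ = c ^ 2 / B w₁ w₁ := by
          field_simp
        rw [h2, h3]; linarith
      have hv0 : v = 0 := by
        by_contra hne
        exact absurd (hW v hvW hne) (not_lt.mpr hBv)
      have hv0' : w - (c / B w₁ w₁) • w₁ = 0 := hv0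
      exact Submodule.mem_span_singleton.mpr
        ⟨c / B w₁ w₁, (sub_eq_zero.mp hv0').symm⟩
    · push_neg at hnone
      refine (rank_submodule_le_one_iff W).mpr ⟨0, Submodule.zero_mem W, ?_⟩
      intro w hw
      have : w = 0 := by by_contra h; exact h (hnone w hw)
      simp [this]
end
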